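/- arXiv:2510.25373 — 2 statements merged into one kernel-verified Lean document; each statement's English description precedes it below -/
import Mathlib

section
/- Let c_imp ≥ c_exp and f(x) = c_imp·max(x,0) + c_exp·min(x,0). Let P and Q be two partitions of the index set {1,…,n} such that Q refines P. For real numbers x_1,…,x_n, define Cost(R) = Σ over blocks B of R of f(Σ_{i∈B} x_i). Then Cost(P) ≤ Cost(Q). In other words, a coarser Netting Interval (longer averaging window) never increases the electricity bill, and refining the Netting Interval is monotone: finer netting yields a bill at least as large. -/
/-!
Writing `f x = c_exp * x + (c_imp - c_exp) * max x 0` shows that `f` is subadditive with `f 0 = 0`.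
Each block `B` of `P` is the disjoint union of the sets `C ∩ B` with `C` a block of `Q`, so
`f (x B) ≤ ∑_C f (x (C ∩ B))`; summing over `B` and exchanging the sums, each block `C` of `Q`
lies in a single block of `P` and meets the others in `∅`, which leaves `∑_C f (x C)`.
-/

open Finset

namespace Finpartition

variable {α : Type*} [DecidableEq α] {s : Finset α}

theorem sum_sum_parts {M : Type*} [AddCommMonoid M] (P : Finpartition s) (g : α → M) :
    ∑ t ∈ P.parts, ∑ i ∈ t, g i = ∑ i ∈ s, g i := by
  simpa only [P.biUnion_parts, id] using (sum_biUnion P.disjoint (f := g)).symm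

theorem sum_eq_sum_parts_inter {M : Type*} [AddCommMonoid M] (P : Finpartition s) {t : Finset α}
    (ht : t ⊆ s) (g : α → M) : ∑ i ∈ t, g i = ∑ C ∈ P.parts, ∑ i ∈ C ∩ t, g i := by
  rw [← (P.restrict ht).sum_sum_parts, sum_restrict _ _ (fun C ↦ ∑ i ∈ C, g i) sum_empty]
  rfl

theorem sum_parts_inter_eq_of_subset {M : Type*} [AddCommMonoid M] (P : Finpartition s)
    {B C : Finset α} (hB : B ∈ P.parts) (hCB : C ⊆ B) (φ : Finset α → M) (hφ : φ ∅ = 0) :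
    ∑ B' ∈ P.parts, φ (C ∩ B') = φ C := by
  rw [sum_eq_single_of_mem B hB fun B' hB' hne ↦ ?_, inter_eq_left.2 hCB]
  have hdisj : Disjoint C B' := (P.disjoint hB hB' hne.symm).mono_left hCB
  rw [disjoint_iff_inter_eq_empty.1 hdisj, hφ]

variable {M N : Type*} [AddCommMonoid M] [AddCommMonoid N] [PartialOrder N] [IsOrderedAddMonoid N]

theorem sum_map_sum_parts_le_of_le {P Q : Finpartition s} (hQP : Q ≤ P) (φ : M → N)
    (h_zero : φ 0 = 0) (h_add : ∀ a b, φ (a + b) ≤ φ a + φ b) (x : α → M) :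
    ∑ B ∈ P.parts, φ (∑ i ∈ B, x i) ≤ ∑ C ∈ Q.parts, φ (∑ i ∈ C, x i) :=
  calc ∑ B ∈ P.parts, φ (∑ i ∈ B, x i)
      = ∑ B ∈ P.parts, φ (∑ C ∈ Q.parts, ∑ i ∈ C ∩ B, x i) := by
        refine sum_congr rfl fun B hB ↦ ?_
        rw [Q.sum_eq_sum_parts_inter (P.le hB)]
    _ ≤ ∑ B ∈ P.parts, ∑ C ∈ Q.parts, φ (∑ i ∈ C ∩ B, x i) :=
        sum_le_sum fun B _ ↦ le_sum_of_subadditive φ h_zero.le h_add _ _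
    _ = ∑ C ∈ Q.parts, ∑ B ∈ P.parts, φ (∑ i ∈ C ∩ B, x i) := sum_comm
    _ = ∑ C ∈ Q.parts, φ (∑ i ∈ C, x i) := by
        refine sum_congr rfl fun C hC ↦ ?_
        obtain ⟨B, hB, hCB⟩ := hQP hC
        exact P.sum_parts_inter_eq_of_subset hB hCB (fun D ↦ φ (∑ i ∈ D, x i)) (by simpa)

end Finpartition

theorem tariff_add_le {c_imp c_exp : ℝ} (h : c_exp ≤ c_imp) (a b : ℝ) :
    c_imp * max (a + b) 0 + c_exp * min (a + b) 0 ≤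
      (c_imp * max a 0 + c_exp * min a 0) + (c_imp * max b 0 + c_exp * min b 0) := by
  have hsplit (y : ℝ) :
      c_imp * max y 0 + c_exp * min y 0 = c_exp * y + (c_imp - c_exp) * max y 0 := by
    linear_combination c_exp * min_add_max y 0
  have hmax : max (a + b) 0 ≤ max a 0 + max b 0 := by
    simpa using max_add_add_le_max_add_max (a := a) (b := b) (c := (0:ℝ)) (d := 0)
  rw [hsplit, hsplit, hsplit]
  nlinarith [mul_le_mul_of_nonneg_left hmax (sub_nonneg.2 h)]

/-- Refining the Netting Interval partition never decreases the bill: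
if `Q` refines `P` then `Cost(P) ≤ Cost(Q)`. -/
theorem netting_refinement_monotone (c_imp c_exp : ℝ) (h : c_exp ≤ c_imp)
    (f : ℝ → ℝ) (hf : ∀ x, f x = c_imp * max x 0 + c_exp * min x 0)
    (n : ℕ) (x : Fin n → ℝ)
    (P Q : Finpartition (Finset.univ : Finset (Fin n)))
    (hQP : Q ≤ P) :
    ∑ B ∈ P.parts, f (∑ i ∈ B, x i) ≤ ∑ B ∈ Q.parts, f (∑ i ∈ B, x i) := by
  refine Finpartition.sum_map_sum_parts_le_of_le hQP f (by simp [hf]) (fun a b ↦ ?_) x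
  simpa only [hf] using tariff_add_le h a b
end

section
/- Let c_imp ≥ c_exp, f(x) = c_imp·max(x,0) + c_exp·min(x,0), and let x_1,…,x_n be real numbers with mean x̄. Then the underestimation gap G = (1/n)Σ_i f(x_i) − f(x̄) satisfies 0 ≤ G ≤ (c_imp − c_exp)·min( (1/n)Σ_i max(x_i,0), (1/n)Σ_i max(−x_i,0) ). In particular, if all x_i have the same sign (no import/export crossing in the interval), then G = 0. -/
/-- The underestimation gap of an averaged evaluation on one window is
nonnegative, bounded by the price spread times the smaller of the average
gross import and average gross export, and vanishes when all samples have the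
same sign. -/
theorem underestimation_gap_bound (c_imp c_exp : ℝ) (h : c_exp ≤ c_imp)
    (f : ℝ → ℝ) (hf : ∀ x, f x = c_imp * max x 0 + c_exp * min x 0)
    (n : ℕ) (hn : 0 < n) (x : Fin n → ℝ) (G : ℝ)
    (hG : G = (1 / n) * ∑ i, f (x i) - f ((∑ i, x i) / n)) :
    0 ≤ G ∧
    G ≤ (c_imp - c_exp) *
        min ((1 / n) * ∑ i, max (x i) 0) ((1 / n) * ∑ i, max (-(x i)) 0) ∧
    ((∀ i, 0 ≤ x i) ∨ (∀ i, x i ≤ 0) → G = 0) := by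
  have hnpos : (0:ℝ) < n := by exact_mod_cast hn
  set s := ∑ i, x i with hs
  set A := ∑ i, max (x i) 0 with hA
  set B := ∑ i, max (-(x i)) 0 with hB
  have hAnn : 0 ≤ A := Finset.sum_nonneg fun i _ => le_max_right _ _
  have hBnn : 0 ≤ B := Finset.sum_nonneg fun i _ => le_max_right _ _
  have hAB : A - B = s := by
    rw [hA, hB, hs, ← Finset.sum_sub_distrib]
    refine Finset.sum_congr rfl fun i _ => ?_
    rcases le_total (x i) 0 with h1 | h1
    · rw [max_eq_right h1, max_eq_left (by linarith)]; ring
    · rw [max_eq_left h1, max_eq_right (by linarith)]; ring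
  have hsA : s ≤ A := by
    rw [hs, hA]; exact Finset.sum_le_sum fun i _ => le_max_left _ _
  have hmaxsA : max s 0 ≤ A := max_le hsA hAnn
  have hmm : max s 0 - max (-s) 0 = s := by
    rcases le_total s 0 with h1 | h1
    · rw [max_eq_right h1, max_eq_left (by linarith)]; ring
    · rw [max_eq_left h1, max_eq_right (by linarith)]; ring
  set t := A - max s 0 with ht
  have htnn : 0 ≤ t := by rw [ht]; linarith
  have ht2 : max (-s) 0 = B - t := by rw [ht]; linarith
  have htB : t ≤ B := by
    have : 0 ≤ max (-s) 0 := le_max_right (-s) 0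
    linarith
  have htA : t ≤ A := by
    have : 0 ≤ max s 0 := le_max_right s 0
    linarith
  have hminneg : ∀ a : ℝ, min a 0 = -(max (-a) 0) := by
    intro a
    rcases le_total a 0 with h1 | h1
    · rw [min_eq_left h1, max_eq_left (by linarith)]; ring
    · rw [min_eq_right h1, max_eq_right (by linarith)]; ring
  have hsumf : ∑ i, f (x i) = c_imp * A - c_exp * B := by
    simp only [hf, hminneg]
    rw [Finset.sum_add_distrib, ← Finset.mul_sum, ← hA]
    rw [show ∀ g : Fin n → ℝ, ∑ i, c_exp * -(g i) = -(c_exp * ∑ i, g i) from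
      fun g => by rw [Finset.mul_sum]; simp [mul_comm]]
    rw [← hB]; ring
  have hmaxdiv : max (s / n) 0 = (max s 0) / n := by
    rcases le_total s 0 with h1 | h1
    · rw [max_eq_right (div_nonpos_of_nonpos_of_nonneg h1 hnpos.le),
        max_eq_right h1, zero_div]
    · rw [max_eq_left (div_nonneg h1 hnpos.le), max_eq_left h1]
  have hmindiv : min (s / n) 0 = (min s 0) / n := by
    rcases le_total s 0 with h1 | h1
    · rw [min_eq_left (div_nonpos_of_nonpos_of_nonneg h1 hnpos.le), min_eq_left h1]
    · rw [min_eq_right (div_nonneg h1 hnpos.le), min_eq_right h1, zero_div]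
  have hGt : G = (c_imp - c_exp) * (t / n) := by
    rw [hG, hsumf, hf, hmaxdiv, hmindiv, hminneg s, ht2,
      show max s 0 = A - t from by rw [ht]; ring]
    field_simp
    ring
  refine ⟨?_, ?_, ?_⟩
  · rw [hGt]
    exact mul_nonneg (by linarith) (div_nonneg htnn hnpos.le)
  · rw [hGt]
    apply mul_le_mul_of_nonneg_left _ (by linarith : (0:ℝ) ≤ c_imp - c_exp)
    refine le_min ?_ ?_
    · rw [div_eq_mul_inv, mul_comm, ← one_div]
      exact mul_le_mul_of_nonneg_left htA (by positivity)
    · rw [div_eq_mul_inv, mul_comm, ← one_div]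
      exact mul_le_mul_of_nonneg_left htB (by positivity)
  · rintro (hp | hp)
    · have hAs : A = s := by
        rw [hA, hs]
        exact Finset.sum_congr rfl fun i _ => max_eq_left (hp i)
      have hsnn : 0 ≤ s := hAs ▸ hAnn
      have : t = 0 := by rw [ht, hAs, max_eq_left hsnn]; ring
      rw [hGt, this]; ring
    · have hBs : B = -s := by
        rw [hB, hs, ← Finset.sum_neg_distrib]
        exact Finset.sum_congr rfl fun i _ => max_eq_left (by linarith [hp i])
      have hsnp : s ≤ 0 := by linarith [hBnn, hBs]
      have : t = 0 := by
        have := ht2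
        rw [max_eq_left (by linarith : 0 ≤ -s), hBs] at this
        linarith
      rw [hGt, this]; ring
end
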